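/- arXiv:1203.2437 — 2 statements merged into one kernel-verified Lean document; each statement's English description precedes it below -/
import Mathlib

section
/- The set unSvar(p), defined recursively by unSvar(p) = ⋃_{j=0}^{i} { γ m δ : γ ∈ unSvar(a₁...a_j), δ ∈ unSvar(a_{j+1}...a_i β) } where p = α m β with m = max(p) and α = a₁...a_i, contains every word λ (with the same letters as p) such that S(λ) = p. That is, if S(λ) = p then λ ∈ unSvar(p). -/
/-!
Let `m` be the largest letter of a word `λ = γ m δ` of distinct letters. When `m` arrives, it
pops everything `γ` left on the stack and then, being larger than every letter of `δ`, stays at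
the bottom of the stack until the end; hence `S(γ m δ) = S(γ) S(δ) m`. Induction on the length
then puts `λ` in `unSvar(S λ)`, via the splitting `a₁ = S(γ)`, `a₂ = S(δ)`, `β = ε`.
-/

/-- Pop from the stack (top first) all letters smaller than `x`;
returns (popped output, remaining stack). -/
def stackPop (x : ℕ) : List ℕ → List ℕ × List ℕ
  | [] => ([], [])
  | t :: ts =>
    if t < x then
      let p := stackPop x ts
      (t :: p.1, p.2)
    else ([], t :: ts)

/-- Run the stack-sorting procedure with the given stack and input;
at the end the (increasing) stack is flushed to the output. -/
def stackRun : List ℕ → List ℕ → List ℕ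
  | stack, [] => stack
  | stack, x :: xs =>
    let p := stackPop x stack
    p.1 ++ stackRun (x :: p.2) xs

/-- The stack-sort operator: one pass of a permutation (word) through a stack. -/
def S (w : List ℕ) : List ℕ := stackRun [] w

/-- `w` is (the one-line notation of) a permutation of `{1, …, n}`. -/
def IsPermOf (w : List ℕ) (n : ℕ) : Prop := w.Perm (List.range' 1 n)

/-- The identity permutation `1 2 ⋯ n` in one-line notation. -/
def idPerm (n : ℕ) : List ℕ := List.range' 1 n

/-- `MemUnSvar lam p` means `lam ∈ unSvar(p)`: the recursive candidate set for
preimages of `p` under stack-sort.  For `p = a₁⋯a_i m β` with `m = max p`,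
`unSvar p = ⋃_{j=0}^{i} { γ m δ : γ ∈ unSvar(a₁⋯a_j), δ ∈ unSvar(a_{j+1}⋯a_i β) }`,
and `unSvar(ε) = {ε}`. -/
inductive MemUnSvar : List ℕ → List ℕ → Prop
  | nil : MemUnSvar [] []
  | step (m : ℕ) (a₁ a₂ β γ δ : List ℕ)
      (hmax : ∀ x ∈ a₁ ++ a₂ ++ β, x < m)
      (hγ : MemUnSvar γ a₁) (hδ : MemUnSvar δ (a₂ ++ β)) :
      MemUnSvar (γ ++ m :: δ) (a₁ ++ a₂ ++ m :: β)

lemma stackPop_fst_append_snd (x : ℕ) : ∀ s : List ℕ, (stackPop x s).1 ++ (stackPop x s).2 = s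
  | [] => rfl
  | t :: ts => by
    simp only [stackPop]
    split
    · simpa using stackPop_fst_append_snd x ts
    · rfl

open List in
lemma stackRun_perm : ∀ s w : List ℕ, (stackRun s w).Perm (s ++ w)
  | s, [] => by simp [stackRun]
  | s, x :: xs => by
    have hsplit := stackPop_fst_append_snd x s
    calc (stackPop x s).1 ++ stackRun (x :: (stackPop x s).2) xs
        _ ~ (stackPop x s).1 ++ (x :: (stackPop x s).2 ++ xs) :=
          (stackRun_perm _ xs).append_left _
        _ = (stackPop x s).1 ++ x :: ((stackPop x s).2 ++ xs) := rfl
        _ ~ x :: ((stackPop x s).1 ++ ((stackPop x s).2 ++ xs)) := List.perm_middle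
        _ = x :: (s ++ xs) := by rw [← List.append_assoc, hsplit]
        _ ~ s ++ x :: xs := List.perm_middle.symm

lemma S_perm (w : List ℕ) : (S w).Perm w := stackRun_perm [] w

lemma stackPop_of_forall_lt {x : ℕ} : ∀ {s : List ℕ}, (∀ t ∈ s, t < x) → stackPop x s = (s, [])
  | [], _ => rfl
  | t :: ts, h => by
    simp only [List.mem_cons, forall_eq_or_imp] at h
    simp only [stackPop, if_pos h.1, stackPop_of_forall_lt h.2]

lemma stackPop_append_singleton {x m : ℕ} (hx : x < m) :
    ∀ s : List ℕ, stackPop x (s ++ [m]) = ((stackPop x s).1, (stackPop x s).2 ++ [m])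
  | [] => by simp [stackPop, hx.not_gt]
  | t :: ts => by
    simp only [List.cons_append, stackPop]
    split
    · simp [stackPop_append_singleton hx ts]
    · rfl

lemma stackRun_append_singleton {m : ℕ} :
    ∀ {w : List ℕ}, (∀ t ∈ w, t < m) → ∀ s, stackRun (s ++ [m]) w = stackRun s w ++ [m]
  | [], _, _ => rfl
  | x :: xs, hw, s => by
    simp only [List.mem_cons, forall_eq_or_imp] at hw
    simp only [stackRun, stackPop_append_singleton hw.1, List.append_assoc]
    rw [← stackRun_append_singleton hw.2, List.cons_append]

lemma stackRun_append_cons_of_forall_lt {m : ℕ} {s γ δ : List ℕ} (hs : ∀ t ∈ s, t < m)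
    (hγ : ∀ t ∈ γ, t < m) (hδ : ∀ t ∈ δ, t < m) :
    stackRun s (γ ++ m :: δ) = stackRun s γ ++ stackRun [] δ ++ [m] := by
  induction γ generalizing s with
  | nil =>
    simp only [List.nil_append, stackRun, stackPop_of_forall_lt hs, List.append_assoc]
    exact congrArg (s ++ ·) (stackRun_append_singleton hδ [])
  | cons x γ ih =>
    simp only [List.mem_cons, forall_eq_or_imp] at hγ
    have hstack : ∀ t ∈ x :: (stackPop x s).2, t < m := by
      simp only [List.mem_cons, forall_eq_or_imp]
      refine ⟨hγ.1, fun t ht => hs t ?_⟩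
      rw [← stackPop_fst_append_snd x s]
      exact List.mem_append_right _ ht
    simp only [List.cons_append, stackRun, ih hstack hγ.2, List.append_assoc]

theorem S_append_cons_of_forall_lt {m : ℕ} {γ δ : List ℕ} (hγ : ∀ t ∈ γ, t < m)
    (hδ : ∀ t ∈ δ, t < m) : S (γ ++ m :: δ) = S γ ++ S δ ++ [m] :=
  stackRun_append_cons_of_forall_lt (by simp) hγ hδ

lemma exists_eq_append_cons_forall_lt {w : List ℕ} (hw : w.Nodup) (hne : w ≠ []) :
    ∃ γ m δ, w = γ ++ m :: δ ∧ ∀ t ∈ γ ++ δ, t < m := by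
  obtain ⟨γ, δ, hsplit⟩ := List.append_of_mem (List.max_mem hne)
  refine ⟨γ, w.max hne, δ, hsplit, fun t ht => lt_of_le_of_ne (List.le_max_of_mem ?_) ?_⟩
  · rw [hsplit, List.perm_middle.mem_iff]
    exact List.mem_cons_of_mem _ ht
  · rintro rfl
    rw [hsplit, List.perm_middle.nodup_iff, List.nodup_cons] at hw
    exact hw.1 ht

theorem memUnSvar_S (w : List ℕ) (hw : w.Nodup) : MemUnSvar w (S w) := by
  rcases eq_or_ne w [] with rfl | hne
  · exact MemUnSvar.nil
  obtain ⟨γ, m, δ, rfl, hlt⟩ := exists_eq_append_cons_forall_lt hw hne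
  have hγ : ∀ t ∈ γ, t < m := fun t ht => hlt t (List.mem_append_left _ ht)
  have hδ : ∀ t ∈ δ, t < m := fun t ht => hlt t (List.mem_append_right _ ht)
  obtain ⟨hγnd, hδnd, -⟩ := List.nodup_append.mp (List.perm_middle.nodup_iff.mp hw).of_cons
  have hmax : ∀ t ∈ S γ ++ S δ ++ [], t < m := by
    simpa [(S_perm γ).mem_iff, (S_perm δ).mem_iff] using hlt
  have h := MemUnSvar.step m (S γ) (S δ) [] γ δ hmax (memUnSvar_S γ hγnd)
    (by simpa using memUnSvar_S δ hδnd)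
  rwa [S_append_cons_of_forall_lt hγ hδ]
termination_by w.length
decreasing_by all_goals subst_vars; simp only [List.length_append, List.length_cons]; omega

/-- `unSvar(p)` contains every word `lam` with `S(lam) = p`. -/
theorem mem_unSvar_of_stackSort (lam p : List ℕ) (hnodup : lam.Nodup)
    (h : S lam = p) : MemUnSvar lam p :=
  h ▸ memUnSvar_S lam hnodup
end

section
/- If a permutation contains the classical pattern 23451 (i.e., indices i₁<i₂<i₃<i₄<i₅ with π(i₅)<π(i₁)<π(i₂)<π(i₃)<π(i₄)), then S(π) contains the classical pattern 2341, and hence π is not West-3-stack-sortable: S³(π) ≠ id. -/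
/-- `w` contains the classical pattern 23451. -/
def Contains23451 (w : List ℕ) : Prop :=
  ∃ i1 i2 i3 i4 i5 : Fin w.length, i1 < i2 ∧ i2 < i3 ∧ i3 < i4 ∧ i4 < i5 ∧
    w.get i5 < w.get i1 ∧ w.get i1 < w.get i2 ∧ w.get i2 < w.get i3 ∧
    w.get i3 < w.get i4

/-- `w` contains the classical pattern 2341. -/
def Contains2341 (w : List ℕ) : Prop :=
  ∃ i j k l : Fin w.length, i < j ∧ j < k ∧ k < l ∧
    w.get l < w.get i ∧ w.get i < w.get j ∧ w.get j < w.get k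

open List

lemma stackPop_eq (x : ℕ) (st : List ℕ) :
    stackPop x st = (st.takeWhile (· < x), st.dropWhile (· < x)) := by
  induction st with
  | nil => rfl
  | cons t ts ih => by_cases h : t < x <;> simp [stackPop, h, ih]

lemma stackRun_cons (st : List ℕ) (a : ℕ) (xs : List ℕ) :
    stackRun st (a :: xs) =
      st.takeWhile (· < a) ++ stackRun (a :: st.dropWhile (· < a)) xs := by
  simp [stackRun, stackPop_eq]

lemma stackRun_perm_s18 (st xs : List ℕ) : stackRun st xs ~ st ++ xs := by
  induction xs generalizing st with
  | nil => simp [stackRun]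
  | cons a xs ih =>
    rw [stackRun_cons]
    calc _ ~ st.takeWhile (· < a) ++ (a :: st.dropWhile (· < a) ++ xs) := (ih _).append_left _
      _ ~ st.takeWhile (· < a) ++ st.dropWhile (· < a) ++ a :: xs := by
        simpa only [append_assoc, cons_append] using perm_middle.symm.append_left _
      _ = st ++ a :: xs := by rw [takeWhile_append_dropWhile]

lemma le_of_mem_dropWhile_lt {a x : ℕ} {st : List ℕ} (hst : st.Pairwise (· ≤ ·))
    (hx : x ∈ st.dropWhile (· < a)) : a ≤ x := by
  induction st with
  | nil => simp at hx
  | cons b st ih =>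
    by_cases hb : b < a
    · simp only [dropWhile_cons, hb, decide_true, if_true] at hx
      exact ih hst.of_cons hx
    · simp only [dropWhile_cons, hb, decide_false, Bool.false_eq_true, if_false, mem_cons] at hx
      rcases hx with rfl | hx
      · exact not_lt.1 hb
      · exact (not_lt.1 hb).trans (rel_of_pairwise_cons hst hx)

lemma pairwise_cons_dropWhile_lt {a : ℕ} {st : List ℕ} (hst : st.Pairwise (· ≤ ·)) :
    (a :: st.dropWhile (· < a)).Pairwise (· ≤ ·) :=
  pairwise_cons.2 ⟨fun _ hx => le_of_mem_dropWhile_lt hst hx, hst.sublist (dropWhile_sublist _)⟩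

/-- `st` is the stack, top first; `s` is the part of the increasing run `s ++ p` already on it. -/
theorem sublist_stackRun {xs st s p ys : List ℕ} {z y : ℕ} (hst : st.Pairwise (· ≤ ·))
    (hs : s <+ st) (hinc : (s ++ p ++ [z]).Pairwise (· < ·)) (hxs : p ++ z :: ys <+ xs)
    (hy : y ∈ z :: ys) : s ++ p ++ [y] <+ stackRun st xs := by
  induction xs generalizing st s p with
  | nil => simp at hxs
  | cons a rest ih =>
    rw [stackRun_cons]
    rw [← takeWhile_append_dropWhile (p := (· < a)) (l := st)] at hs
    obtain ⟨s₁, s₂, rfl, hs₁, hs₂⟩ := sublist_append_iff.1 hs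
    have hpush := pairwise_cons_dropWhile_lt (a := a) hst
    rcases sublist_cons_iff.1 hxs with hxs | ⟨r, hr, hrest⟩
    · have := ih hpush (hs₂.cons a) (hinc.sublist (by simp)) hxs
      simpa only [append_assoc] using hs₁.append this
    · -- `a` starts the run, so it exceeds all of `s`, which is therefore popped entirely now
      have ha : a ∈ p ++ [z] := by cases p <;> simp_all
      have hs₂ : s₂ = [] := eq_nil_iff_forall_not_mem.2 fun x hx =>
        (le_of_mem_dropWhile_lt hst (hs₂.subset hx)).not_gt <|
          (pairwise_append (l₁ := s₁ ++ s₂)).1 (by simpa only [append_assoc] using hinc) |>.2.2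
            x (mem_append_right _ hx) a ha
      subst hs₂
      rcases p with _ | ⟨x, p⟩
      · obtain ⟨rfl, rfl⟩ : z = a ∧ ys = r := by simpa using hr
        have hy' : y ∈ stackRun (z :: st.dropWhile (· < z)) rest := by
          refine (stackRun_perm_s18 _ _).mem_iff.2 ?_
          rcases mem_cons.1 hy with rfl | hy
          · simp
          · exact mem_append_right _ (hrest.subset hy)
        simpa using hs₁.append (singleton_sublist.2 hy')
      · obtain ⟨rfl, rfl⟩ : x = a ∧ p ++ z :: ys = r := by simpa using hr
        have := ih (s := [x]) hpush (by simp) (hinc.sublist (by simp)) hrest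
        simpa using hs₁.append this

theorem sublist_S {w p ys : List ℕ} {z y : ℕ} (hinc : (p ++ [z]).Pairwise (· < ·))
    (hw : p ++ z :: ys <+ w) (hy : y ∈ z :: ys) : p ++ [y] <+ S w := by
  simpa [S] using sublist_stackRun (st := []) (s := []) Pairwise.nil (Sublist.refl _) (by simpa) hw hy

lemma Contains23451.exists_sublist {w : List ℕ} (h : Contains23451 w) :
    ∃ a b c d e, [a, b, c, d, e] <+ w ∧ e < a ∧ a < b ∧ b < c ∧ c < d := by
  obtain ⟨i₁, i₂, i₃, i₄, i₅, h₁₂, h₂₃, h₃₄, h₄₅, h₅₁, hab, hbc, hcd⟩ := h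
  have hi : [i₁, i₂, i₃, i₄, i₅].Pairwise (· < ·) := by grind
  exact ⟨_, _, _, _, _, by simpa using map_getElem_sublist hi, h₅₁, hab, hbc, hcd⟩

lemma contains2341_of_sublist {w : List ℕ} {a b c e : ℕ} (h : [a, b, c, e] <+ w)
    (hea : e < a) (hab : a < b) (hbc : b < c) : Contains2341 w := by
  obtain ⟨f, hf⟩ := sublist_iff_exists_fin_orderEmbedding_get_eq.1 h
  refine ⟨f 0, f 1, f 2, f 3, f.strictMono (by decide : (0 : Fin 4) < 1),
    f.strictMono (by decide : (1 : Fin 4) < 2), f.strictMono (by decide : (2 : Fin 4) < 3),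
    ?_, ?_, ?_⟩
  · rw [← hf, ← hf]; exact hea
  · rw [← hf, ← hf]; exact hab
  · rw [← hf, ← hf]; exact hbc

theorem contains23451_not_west3_general (n : ℕ) (w : List ℕ) (h : Contains23451 w) :
    Contains2341 (S w) ∧ S (S (S w)) ≠ idPerm n := by
  obtain ⟨a, b, c, d, e, hw, hea, hab, hbc, hcd⟩ := h.exists_sublist
  have h₁ : [a, b, c, e] <+ S w :=
    sublist_S (p := [a, b, c]) (by grind) hw (by simp)
  have h₂ : [a, b, e] <+ S (S w) :=
    sublist_S (p := [a, b]) (by grind) h₁ (by simp)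
  have h₃ : [a, e] <+ S (S (S w)) :=
    sublist_S (p := [a]) (by grind) h₂ (by simp)
  refine ⟨contains2341_of_sublist h₁ hea hab hbc, fun hid => ?_⟩
  rw [hid, idPerm] at h₃
  exact hea.not_gt (pairwise_pair.1 ((pairwise_lt_range' ..).sublist h₃))

/-- if `π` contains 23451 then `S(π)` contains 2341, and hence
`π` is not West-3-stack-sortable. -/
theorem contains23451_not_west3 (n : ℕ) (w : List ℕ) (hw : IsPermOf w n)
    (h : Contains23451 w) :
    Contains2341 (S w) ∧ S (S (S w)) ≠ idPerm n :=
  contains23451_not_west3_general n w h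
end
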